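/- arXiv:2405.05187 — 6 statements merged into one kernel-verified Lean document; each statement's English description precedes it below -/
import Mathlib

section
/- Let d, N ≥ 1, let A : ℝ^d → Matrix (Fin d) (Fin d) ℝ satisfy, for every z ≠ 0: A(z) is symmetric, A(−z) = A(z), and A(z)·z = 0, and set A(0) = 0. Let s : ℝ × ℝ^d → ℝ^d be any map, and suppose v₁, …, v_N : ℝ → ℝ^d are differentiable and satisfy for every i and every t the particle ODE vᵢ'(t) = −(1/N) ∑_{j=1}^N A(vᵢ(t) − v_j(t)) (s(t, vᵢ(t)) − s(t, v_j(t))). Then the total momentum t ↦ (1/N) ∑_{i=1}^N vᵢ(t) and the kinetic energy t ↦ (1/N) ∑_{i=1}^N |vᵢ(t)|² are constant in t. -/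
/-!
Write `F i j = A(vᵢ - vⱼ) (s(vᵢ) - s(vⱼ))`. Evenness of `A` makes `F` antisymmetric,
`F j i = -F i j`, so the double sum `∑ᵢ ∑ⱼ F i j`, which is `-N` times the derivative of the
total momentum, vanishes. For the energy, antisymmetry turns `∑ᵢ ∑ⱼ vᵢ ⬝ F i j` into
`½ ∑ᵢ ∑ⱼ (vᵢ - vⱼ) ⬝ F i j`, and each term vanishes because `A(z)` is symmetric and kills `z`.
-/

open scoped Matrix

theorem Finset.sum_sum_eq_zero_of_add_swap_eq_zero {ι M : Type*} [Fintype ι] [AddCommGroup M]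
    [IsAddTorsionFree M] (f : ι → ι → M) (hf : ∀ i j, f i j + f j i = 0) :
    ∑ i, ∑ j, f i j = 0 := by
  refine nsmul_right_injective two_ne_zero ?_
  calc 2 • ∑ i, ∑ j, f i j = ∑ i, ∑ j, f i j + ∑ j, ∑ i, f i j := by
        rw [two_nsmul, Finset.sum_comm]
    _ = ∑ i, ∑ j, (f i j + f j i) := by
        simp only [← Finset.sum_add_distrib]
    _ = 2 • 0 := by simp [hf]

theorem eq_of_forall_hasDerivAt_zero {E : Type*} [NormedAddCommGroup E] [NormedSpace ℝ E]
    {f : ℝ → E} (hf : ∀ t, HasDerivAt f 0 t) (t t' : ℝ) : f t = f t' :=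
  is_const_of_deriv_eq_zero (fun t => (hf t).differentiableAt) (fun t => (hf t).deriv) t t'

theorem HasDerivAt.fun_sum_sq {n : Type*} [Fintype n] {u : ℝ → n → ℝ} {u' : n → ℝ}
    {t : ℝ} (hu : HasDerivAt u u' t) :
    HasDerivAt (fun t => ∑ k, u t k ^ 2) (2 * u t ⬝ᵥ u') t := by
  refine (HasDerivAt.fun_sum fun k (_ : k ∈ Finset.univ) =>
    (hasDerivAt_pi.mp hu k).fun_pow 2).congr_deriv ?_
  simp only [dotProduct, Finset.mul_sum]
  refine Finset.sum_congr rfl fun k _ => ?_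
  push_cast
  ring

namespace LandauParticles

variable {ι n R : Type*} [CommRing R] {A : (n → R) → Matrix n n R}

theorem apply_sub_swap (hA_even : ∀ z, z ≠ 0 → A (-z) = A z) (x y : n → R) :
    A (y - x) = A (x - y) := by
  rw [← neg_sub x y]
  rcases eq_or_ne (x - y) 0 with h | h
  · rw [h, neg_zero]
  · exact hA_even _ h

variable [Fintype n]

def pairForce (A : (n → R) → Matrix n n R) (x σ : ι → n → R) (i j : ι) : n → R :=
  A (x i - x j) *ᵥ (σ i - σ j)

theorem pairForce_add_swap (hA_even : ∀ z, z ≠ 0 → A (-z) = A z) (x σ : ι → n → R)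
    (i j : ι) :
    pairForce A x σ i j + pairForce A x σ j i = 0 := by
  rw [pairForce, pairForce, apply_sub_swap hA_even, ← Matrix.mulVec_add]
  simp

theorem dotProduct_mulVec_self_eq_zero (hA_symm : ∀ z, z ≠ 0 → (A z).IsSymm)
    (hA_proj : ∀ z, z ≠ 0 → A z *ᵥ z = 0) (z w : n → R) : z ⬝ᵥ A z *ᵥ w = 0 := by
  rcases eq_or_ne z 0 with rfl | h
  · exact zero_dotProduct _
  · rw [Matrix.dotProduct_mulVec, ← Matrix.mulVec_transpose, (hA_symm z h).eq, hA_proj z h,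
      zero_dotProduct]

variable [Fintype ι] [IsAddTorsionFree R]

theorem sum_sum_pairForce (hA_even : ∀ z, z ≠ 0 → A (-z) = A z) (x σ : ι → n → R) :
    ∑ i, ∑ j, pairForce A x σ i j = 0 :=
  Finset.sum_sum_eq_zero_of_add_swap_eq_zero _ (pairForce_add_swap hA_even x σ)

theorem sum_sum_dotProduct_pairForce (hA_symm : ∀ z, z ≠ 0 → (A z).IsSymm)
    (hA_even : ∀ z, z ≠ 0 → A (-z) = A z) (hA_proj : ∀ z, z ≠ 0 → A z *ᵥ z = 0)
    (x σ : ι → n → R) :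
    ∑ i, ∑ j, x i ⬝ᵥ pairForce A x σ i j = 0 := by
  refine Finset.sum_sum_eq_zero_of_add_swap_eq_zero _ fun i j => ?_
  rw [eq_neg_of_add_eq_zero_right (pairForce_add_swap hA_even x σ i j), dotProduct_neg,
    ← sub_eq_add_neg, ← sub_dotProduct, pairForce]
  exact dotProduct_mulVec_self_eq_zero hA_symm hA_proj _ _

end LandauParticles

open LandauParticles in
theorem stmt0_general (d N : ℕ)
    (A : (Fin d → ℝ) → Matrix (Fin d) (Fin d) ℝ)
    (hA_symm : ∀ z : Fin d → ℝ, z ≠ 0 → (A z).IsSymm)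
    (hA_even : ∀ z : Fin d → ℝ, z ≠ 0 → A (-z) = A z)
    (hA_proj : ∀ z : Fin d → ℝ, z ≠ 0 → (A z).mulVec z = 0)
    (s : ℝ × (Fin d → ℝ) → Fin d → ℝ)
    (v : Fin N → ℝ → Fin d → ℝ)
    (hode : ∀ (i : Fin N) (t : ℝ), HasDerivAt (v i)
      ((-((1 : ℝ) / (N : ℝ))) •
        ∑ j : Fin N, (A (v i t - v j t)).mulVec (s (t, v i t) - s (t, v j t))) t) :
    (∀ t t' : ℝ, ((1 : ℝ) / (N : ℝ)) • ∑ i : Fin N, v i t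
        = ((1 : ℝ) / (N : ℝ)) • ∑ i : Fin N, v i t') ∧
    (∀ t t' : ℝ, ((1 : ℝ) / (N : ℝ)) * ∑ i : Fin N, ∑ k : Fin d, v i t k ^ 2
        = ((1 : ℝ) / (N : ℝ)) * ∑ i : Fin N, ∑ k : Fin d, v i t' k ^ 2) := by
  have hode' (i : Fin N) (t : ℝ) : HasDerivAt (v i) ((-((1 : ℝ) / (N : ℝ))) •
      ∑ j, pairForce A (fun i => v i t) (fun i => s (t, v i t)) i j) t := hode i t
  have hmomentum (t : ℝ) : HasDerivAt (fun t => ∑ i, v i t) 0 t := by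
    simpa only [← Finset.smul_sum, sum_sum_pairForce hA_even, smul_zero] using
      HasDerivAt.fun_sum fun i (_ : i ∈ Finset.univ) => hode' i t
  have henergy (t : ℝ) : HasDerivAt (fun t => ∑ i, ∑ k, v i t k ^ 2) 0 t := by
    simpa only [dotProduct_smul, dotProduct_sum, smul_eq_mul, ← Finset.mul_sum,
      sum_sum_dotProduct_pairForce hA_symm hA_even hA_proj, mul_zero] using
      HasDerivAt.fun_sum fun i (_ : i ∈ Finset.univ) => (hode' i t).fun_sum_sq
  exact ⟨fun t t' => by rw [eq_of_forall_hasDerivAt_zero hmomentum t t'],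
    fun t t' => by rw [eq_of_forall_hasDerivAt_zero henergy t t']⟩

/-- Conservation of momentum and kinetic energy for the score-based
particle ODE system of the homogeneous Landau equation.  The collision kernel
`A` is symmetric, even and annihilates its argument (for `z ≠ 0`, with `A 0 = 0`),
`s` is an arbitrary (time-dependent) score field, and the particle velocities
`v i` solve `vᵢ' = -(1/N) ∑ⱼ A(vᵢ - vⱼ) (s(t,vᵢ) - s(t,vⱼ))`. -/
theorem stmt0 (d N : ℕ) (hd : 1 ≤ d) (hN : 1 ≤ N)
    (A : (Fin d → ℝ) → Matrix (Fin d) (Fin d) ℝ)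
    (hA_symm : ∀ z : Fin d → ℝ, z ≠ 0 → (A z).IsSymm)
    (hA_even : ∀ z : Fin d → ℝ, z ≠ 0 → A (-z) = A z)
    (hA_proj : ∀ z : Fin d → ℝ, z ≠ 0 → (A z).mulVec z = 0)
    (hA_zero : A 0 = 0)
    (s : ℝ × (Fin d → ℝ) → Fin d → ℝ)
    (v : Fin N → ℝ → Fin d → ℝ)
    (hode : ∀ (i : Fin N) (t : ℝ), HasDerivAt (v i)
      ((-((1 : ℝ) / (N : ℝ))) •
        ∑ j : Fin N, (A (v i t - v j t)).mulVec (s (t, v i t) - s (t, v j t))) t) :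
    (∀ t t' : ℝ, ((1 : ℝ) / (N : ℝ)) • ∑ i : Fin N, v i t
        = ((1 : ℝ) / (N : ℝ)) • ∑ i : Fin N, v i t') ∧
    (∀ t t' : ℝ, ((1 : ℝ) / (N : ℝ)) * ∑ i : Fin N, ∑ k : Fin d, v i t k ^ 2
        = ((1 : ℝ) / (N : ℝ)) * ∑ i : Fin N, ∑ k : Fin d, v i t' k ^ 2) :=
  stmt0_general d N A hA_symm hA_even hA_proj s v hode
end

section
/- Let d, N ≥ 1, let A : ℝ^d → Matrix (Fin d) (Fin d) ℝ satisfy A(−z) = A(z) for all z. Given v₁, …, v_N ∈ ℝ^d, s₁, …, s_N ∈ ℝ^d, a time step Δt ∈ ℝ, suppose v₁⁺, …, v_N⁺ ∈ ℝ^d satisfy the implicit midpoint relation vᵢ⁺ = vᵢ − Δt (1/N) ∑_{j=1}^N A(mᵢ − m_j)(sᵢ − s_j), where mᵢ := (vᵢ + vᵢ⁺)/2. Then ∑_{i=1}^N vᵢ⁺ = ∑_{i=1}^N vᵢ, i.e. the midpoint scheme conserves momentum exactly. -/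
/-! Exchanging `i` and `j` flips the sign of each pair interaction `A(mᵢ - mⱼ)(sᵢ - sⱼ)` because
`A` is even, so the double sum of the interactions vanishes and the update leaves `∑ᵢ vᵢ`
unchanged. -/

open Finset Matrix

theorem Finset.sum_sum_eq_zero_of_antisymm {ι M : Type*} [AddCommGroup M] [IsAddTorsionFree M]
    (s : Finset ι) (f : ι → ι → M) (hf : ∀ i j, f j i = -f i j) :
    ∑ i ∈ s, ∑ j ∈ s, f i j = 0 := by
  have hswap : ∑ i ∈ s, ∑ j ∈ s, f i j = -∑ i ∈ s, ∑ j ∈ s, f i j := by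
    conv_lhs => rw [sum_comm]
    rw [← sum_neg_distrib]
    exact sum_congr rfl fun i _ => by
      rw [← sum_neg_distrib]
      exact sum_congr rfl fun j _ => hf i j
  refine two_nsmul_eq_zero.mp ?_
  rw [two_nsmul]
  nth_rw 1 [hswap]
  exact neg_add_cancel _

theorem sum_sum_mulVec_sub_eq_zero_of_even {ι n R : Type*} [Fintype n] [Ring R]
    [IsAddTorsionFree R] (t : Finset ι) (A : (n → R) → Matrix n n R)
    (hA : ∀ z, A (-z) = A z) (m s : ι → n → R) :
    ∑ i ∈ t, ∑ j ∈ t, A (m i - m j) *ᵥ (s i - s j) = 0 :=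
  sum_sum_eq_zero_of_antisymm t _ fun i j => by
    rw [← neg_sub, hA, ← neg_sub (s i), mulVec_neg]

theorem stmt4_general (d N : ℕ)
    (A : (Fin d → ℝ) → Matrix (Fin d) (Fin d) ℝ)
    (hA_even : ∀ z : Fin d → ℝ, A (-z) = A z)
    (v s : Fin N → Fin d → ℝ) (Δt : ℝ)
    (vp : Fin N → Fin d → ℝ)
    (m : Fin N → Fin d → ℝ)
    (hvp : ∀ i, vp i
      = v i - (Δt * ((1 : ℝ) / (N : ℝ))) • ∑ j : Fin N, (A (m i - m j)).mulVec (s i - s j)) :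
    ∑ i : Fin N, vp i = ∑ i : Fin N, v i := by
  simp only [hvp, sum_sub_distrib, ← smul_sum,
    sum_sum_mulVec_sub_eq_zero_of_even univ A hA_even m s, smul_zero, sub_zero]

/-- The implicit midpoint discretization of the score-based
particle method, `vᵢ⁺ = vᵢ - (Δt/N) ∑ⱼ A(mᵢ - mⱼ)(sᵢ - sⱼ)` with midpoints
`mᵢ = (vᵢ + vᵢ⁺)/2`, conserves momentum exactly, using only evenness of `A`. -/
theorem stmt4 (d N : ℕ) (hd : 1 ≤ d) (hN : 1 ≤ N)
    (A : (Fin d → ℝ) → Matrix (Fin d) (Fin d) ℝ)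
    (hA_even : ∀ z : Fin d → ℝ, A (-z) = A z)
    (v s : Fin N → Fin d → ℝ) (Δt : ℝ)
    (vp : Fin N → Fin d → ℝ)
    (m : Fin N → Fin d → ℝ)
    (hm : ∀ i, m i = ((1 : ℝ) / 2) • (v i + vp i))
    (hvp : ∀ i, vp i
      = v i - (Δt * ((1 : ℝ) / (N : ℝ))) • ∑ j : Fin N, (A (m i - m j)).mulVec (s i - s j)) :
    ∑ i : Fin N, vp i = ∑ i : Fin N, v i :=
  stmt4_general d N A hA_even v s Δt vp m hvp
end

section
/- Let d, N ≥ 1, let A : ℝ^d → Matrix (Fin d) (Fin d) ℝ satisfy, for every z ≠ 0: A(z) is symmetric, A(−z) = A(z), and A(z)·z = 0, with A(0) = 0. Given v₁, …, v_N ∈ ℝ^d, s₁, …, s_N ∈ ℝ^d, a time step Δt ∈ ℝ, suppose v₁⁺, …, v_N⁺ ∈ ℝ^d satisfy the implicit midpoint relation vᵢ⁺ = vᵢ − Δt (1/N) ∑_{j=1}^N A(mᵢ − m_j)(sᵢ − s_j), where mᵢ := (vᵢ + vᵢ⁺)/2. Then ∑_{i=1}^N |vᵢ⁺|² = ∑_{i=1}^N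 |vᵢ|², i.e. the midpoint scheme conserves kinetic energy exactly. -/
/-!
Write the scheme as `vᵢ⁺ = vᵢ - c Fᵢ` with `Fᵢ = ∑ⱼ A(mᵢ - mⱼ)(sᵢ - sⱼ)`. Since
`vᵢ⁺ + vᵢ = 2mᵢ`, the energy change is `∑ᵢ (vᵢ⁺ - vᵢ)·(vᵢ⁺ + vᵢ) = -2c ∑ᵢ Fᵢ·mᵢ`, so it
vanishes once `∑ᵢ Fᵢ·mᵢ = 0`. Symmetrising the double sum, the `(i, j)` and `(j, i)` terms
combine (by evenness of `A`) into `A(z)(sᵢ - sⱼ)·z` with `z = mᵢ - mⱼ`,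
which vanishes because `A(z)` is symmetric and kills `z`.
-/

open Matrix

variable {R ι n : Type*} [Fintype n]

lemma Matrix.IsSymm.mulVec_dotProduct_eq_zero [CommRing R] {M : Matrix n n R} (hM : M.IsSymm)
    {z : n → R} (hz : M *ᵥ z = 0) (w : n → R) : M *ᵥ w ⬝ᵥ z = 0 := by
  rw [dotProduct_comm, dotProduct_mulVec, ← mulVec_transpose, hM.eq, hz, zero_dotProduct]

lemma Finset.sum_sum_eq_zero_of_add_swap [Fintype ι] {G : Type*} [AddCommGroup G]
    [IsAddTorsionFree G] (f : ι → ι → G) (hf : ∀ i j, f i j + f j i = 0) :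
    ∑ i, ∑ j, f i j = 0 := by
  rw [← self_eq_neg]
  calc ∑ i, ∑ j, f i j = ∑ i, ∑ j, f j i := Finset.sum_comm
    _ = -∑ i, ∑ j, f i j := by
      rw [← Finset.sum_neg_distrib]
      refine Finset.sum_congr rfl fun i _ => ?_
      rw [← Finset.sum_neg_distrib]
      exact Finset.sum_congr rfl fun j _ => eq_neg_of_add_eq_zero_left (hf j i)

lemma dotProduct_self_sub_dotProduct_self [CommRing R] (a b : n → R) :
    a ⬝ᵥ a - b ⬝ᵥ b = (a - b) ⬝ᵥ (a + b) := by
  simp only [sub_dotProduct, dotProduct_add, dotProduct_comm b a]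
  abel

lemma sum_dotProduct_self_eq_of_midpoint [Fintype ι] [Field R] [CharZero R]
    (v vp m F : ι → n → R) (c : R)
    (hm : ∀ i, m i = (1 / 2 : R) • (v i + vp i)) (hvp : ∀ i, vp i = v i - c • F i)
    (hF : ∑ i, F i ⬝ᵥ m i = 0) : ∑ i, vp i ⬝ᵥ vp i = ∑ i, v i ⬝ᵥ v i := by
  have hstep (i : ι) : vp i ⬝ᵥ vp i - v i ⬝ᵥ v i = -(2 * c) * (F i ⬝ᵥ m i) := by
    have hsum : vp i + v i = (2 : R) • m i := by
      rw [hm i, smul_smul, add_comm]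
      norm_num
    rw [dotProduct_self_sub_dotProduct_self, hsum, hvp i, sub_sub_cancel_left,
      neg_dotProduct, smul_dotProduct, dotProduct_smul, smul_eq_mul, smul_eq_mul]
    ring
  rw [← sub_eq_zero, ← Finset.sum_sub_distrib, Finset.sum_congr rfl fun i _ => hstep i,
    ← Finset.mul_sum, hF, mul_zero]

section LandauKernel

variable [CommRing R] {A : (n → R) → Matrix n n R}

lemma landau_pair_add_swap (hA_symm : ∀ z, z ≠ 0 → (A z).IsSymm)
    (hA_even : ∀ z, z ≠ 0 → A (-z) = A z) (hA_proj : ∀ z, z ≠ 0 → A z *ᵥ z = 0)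
    (m s : ι → n → R) (i j : ι) :
    A (m i - m j) *ᵥ (s i - s j) ⬝ᵥ m i + A (m j - m i) *ᵥ (s j - s i) ⬝ᵥ m j = 0 := by
  have hpair : A (m i - m j) *ᵥ (s i - s j) ⬝ᵥ m i + A (m j - m i) *ᵥ (s j - s i) ⬝ᵥ m j
      = A (m i - m j) *ᵥ (s i - s j) ⬝ᵥ (m i - m j) := by
    have heven : A (m j - m i) = A (m i - m j) := by
      by_cases hz : m i - m j = 0
      · rw [sub_eq_zero.mp hz]
      · rw [← neg_sub, hA_even _ hz]
    rw [heven, ← neg_sub (s i), mulVec_neg, neg_dotProduct, dotProduct_sub]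
    abel
  rw [hpair]
  by_cases hz : m i - m j = 0
  · rw [hz, dotProduct_zero]
  · exact (hA_symm _ hz).mulVec_dotProduct_eq_zero (hA_proj _ hz) _

lemma landau_sum_force_dotProduct_eq_zero [Fintype ι] [IsAddTorsionFree R]
    (hA_symm : ∀ z, z ≠ 0 → (A z).IsSymm)
    (hA_even : ∀ z, z ≠ 0 → A (-z) = A z) (hA_proj : ∀ z, z ≠ 0 → A z *ᵥ z = 0)
    (m s : ι → n → R) :
    ∑ i, (∑ j, A (m i - m j) *ᵥ (s i - s j)) ⬝ᵥ m i = 0 := by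
  simp only [sum_dotProduct]
  exact Finset.sum_sum_eq_zero_of_add_swap _ (landau_pair_add_swap hA_symm hA_even hA_proj m s)

end LandauKernel

theorem stmt5_general (d N : ℕ)
    (A : (Fin d → ℝ) → Matrix (Fin d) (Fin d) ℝ)
    (hA_symm : ∀ z : Fin d → ℝ, z ≠ 0 → (A z).IsSymm)
    (hA_even : ∀ z : Fin d → ℝ, z ≠ 0 → A (-z) = A z)
    (hA_proj : ∀ z : Fin d → ℝ, z ≠ 0 → (A z).mulVec z = 0)
    (v s : Fin N → Fin d → ℝ) (Δt : ℝ)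
    (vp : Fin N → Fin d → ℝ)
    (m : Fin N → Fin d → ℝ)
    (hm : ∀ i, m i = ((1 : ℝ) / 2) • (v i + vp i))
    (hvp : ∀ i, vp i
      = v i - (Δt * ((1 : ℝ) / (N : ℝ))) • ∑ j : Fin N, (A (m i - m j)).mulVec (s i - s j)) :
    ∑ i : Fin N, ∑ k : Fin d, vp i k ^ 2 = ∑ i : Fin N, ∑ k : Fin d, v i k ^ 2 := by
  simpa only [dotProduct, sq] using sum_dotProduct_self_eq_of_midpoint v vp m _ _ hm hvp
    (landau_sum_force_dotProduct_eq_zero hA_symm hA_even hA_proj m s)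

/-- The implicit midpoint discretization of the score-based
particle method, `vᵢ⁺ = vᵢ - (Δt/N) ∑ⱼ A(mᵢ - mⱼ)(sᵢ - sⱼ)` with midpoints
`mᵢ = (vᵢ + vᵢ⁺)/2`, conserves kinetic energy exactly for a symmetric, even
kernel `A` with the projection property `A(z) z = 0` (and `A 0 = 0`). -/
theorem stmt5 (d N : ℕ) (hd : 1 ≤ d) (hN : 1 ≤ N)
    (A : (Fin d → ℝ) → Matrix (Fin d) (Fin d) ℝ)
    (hA_symm : ∀ z : Fin d → ℝ, z ≠ 0 → (A z).IsSymm)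
    (hA_even : ∀ z : Fin d → ℝ, z ≠ 0 → A (-z) = A z)
    (hA_proj : ∀ z : Fin d → ℝ, z ≠ 0 → (A z).mulVec z = 0)
    (hA_zero : A 0 = 0)
    (v s : Fin N → Fin d → ℝ) (Δt : ℝ)
    (vp : Fin N → Fin d → ℝ)
    (m : Fin N → Fin d → ℝ)
    (hm : ∀ i, m i = ((1 : ℝ) / 2) • (v i + vp i))
    (hvp : ∀ i, vp i
      = v i - (Δt * ((1 : ℝ) / (N : ℝ))) • ∑ j : Fin N, (A (m i - m j)).mulVec (s i - s j)) :
    ∑ i : Fin N, ∑ k : Fin d, vp i k ^ 2 = ∑ i : Fin N, ∑ k : Fin d, v i k ^ 2 :=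
  stmt5_general d N A hA_symm hA_even hA_proj v s Δt vp m hm hvp
end

section
/- Let γ ∈ ℝ and let ρ : ℝ³ → ℝ be Lebesgue-measurable with ρ ≥ 0 a.e., ∫_{ℝ³} ρ(v) dv = 1, ρ supported in a bounded set, and such that v ↦ |v|^γ |v|² ρ(v) is Lebesgue-integrable. Then the 3×3 matrix B := ∫_{ℝ³} |v|^γ (|v|² I₃ − v ⊗ v) ρ(v) dv, whose entries are B_{kk} = ∫ |v|^γ (|v|² − v_k²) ρ dv and B_{kl} = −∫ |v|^γ v_k v_l ρ dv for k ≠ l, is symmetric positive definite. -/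
/-!
Writing `B` entrywise as integrals, `x ⬝ B x = ∫ |v|^γ (|v|²|x|² - ⟨x, v⟩²) ρ(v) dv`.
By Lagrange's identity the bracket is half the sum of the squares `(x_i v_j - x_j v_i)²`, so it
is nonnegative and vanishes only on the line `ℝ x`. In dimension at least two that line is
Lebesgue-null, while `ρ`, having nonzero mass, is nonzero on a set of positive measure; there the
integrand is positive, so the integral is.
-/

open MeasureTheory Matrix

variable {ι : Type*} [Fintype ι]

lemma sum_sq_mul_sum_sq_sub_sq (x v : ι → ℝ) :
    (∑ i, v i ^ 2) * (∑ i, x i ^ 2) - (∑ i, x i * v i) ^ 2 =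
      (∑ i, ∑ j, (x i * v j - x j * v i) ^ 2) / 2 := by
  have h : (∑ i, v i ^ 2) * (∑ i, x i ^ 2) - (∑ i, x i * v i) ^ 2 =
      ∑ i, ∑ j, (v i ^ 2 * x j ^ 2 - x i * v i * (x j * v j)) := by
    simp only [sq, Finset.sum_mul_sum, Finset.sum_sub_distrib]
  rw [h, eq_div_iff two_ne_zero, mul_two]
  nth_rewrite 2 [Finset.sum_comm]
  rw [← Finset.sum_add_distrib]
  refine Finset.sum_congr rfl fun i _ => ?_
  rw [← Finset.sum_add_distrib]
  exact Finset.sum_congr rfl fun j _ => by ring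

lemma mem_span_singleton_of_forall_mul_eq_mul {x v : ι → ℝ} (hx : x ≠ 0)
    (h : ∀ i j, x i * v j = x j * v i) : v ∈ Submodule.span ℝ {x} := by
  obtain ⟨k, hk⟩ : ∃ k, x k ≠ 0 := by
    by_contra! h0
    exact hx (funext h0)
  refine Submodule.mem_span_singleton.2 ⟨v k / x k, funext fun j => ?_⟩
  rw [Pi.smul_apply, smul_eq_mul, div_mul_eq_mul_div, div_eq_iff hk]
  linear_combination -(h k j)

lemma volume_span_singleton_eq_zero (hι : 1 < Fintype.card ι) (x : ι → ℝ) :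
    volume (Submodule.span ℝ {x} : Set (ι → ℝ)) = 0 := by
  refine Measure.addHaar_submodule _ _ fun htop => hι.not_ge ?_
  calc Fintype.card ι = Module.finrank ℝ (⊤ : Submodule ℝ (ι → ℝ)) := by simp
    _ = Module.finrank ℝ (Submodule.span ℝ {x}) := by rw [htop]
    _ ≤ 1 := (finrank_span_le_card {x}).trans (by simp)

section integral

variable {α : Type*} [MeasurableSpace α] {μ : Measure α} {F : α → Matrix ι ι ℝ}

lemma integrable_dotProduct_mulVec (hF : ∀ k l, Integrable (fun a => F a k l) μ) (x : ι → ℝ) :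
    Integrable (fun a => x ⬝ᵥ F a *ᵥ x) μ := by
  simp only [dotProduct, mulVec]
  exact integrable_finsetSum _ fun k _ =>
    (integrable_finsetSum _ fun l _ => (hF k l).mul_const _).const_mul _

lemma dotProduct_of_integral_mulVec (hF : ∀ k l, Integrable (fun a => F a k l) μ) (x : ι → ℝ) :
    x ⬝ᵥ (of fun k l => ∫ a, F a k l ∂μ) *ᵥ x = ∫ a, x ⬝ᵥ F a *ᵥ x ∂μ := by
  simp only [dotProduct, mulVec, of_apply, Finset.mul_sum]
  rw [integral_finsetSum _ fun k _ =>
    integrable_finsetSum _ fun l _ => ((hF k l).mul_const _).const_mul _]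
  refine Finset.sum_congr rfl fun k _ => ?_
  rw [integral_finsetSum _ fun l _ => ((hF k l).mul_const _).const_mul _]
  refine Finset.sum_congr rfl fun l _ => ?_
  rw [integral_const_mul, integral_mul_const]

end integral

lemma rpow_sqrt_sum_sq_pos {v : ι → ℝ} (hv : v ≠ 0) (γ : ℝ) :
    0 < Real.sqrt (∑ m, v m ^ 2) ^ γ := by
  obtain ⟨k, hk⟩ : ∃ k, v k ≠ 0 := by
    by_contra! h
    exact hv (funext h)
  have hsum : 0 < ∑ m, v m ^ 2 :=
    Finset.sum_pos' (fun m _ => sq_nonneg (v m)) ⟨k, Finset.mem_univ k, by positivity⟩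
  exact Real.rpow_pos_of_pos (Real.sqrt_pos.2 hsum) γ

variable [DecidableEq ι]

/-- `|v|² I - v ⊗ v`; the Landau kernel is `|v|^γ` times this matrix. -/
noncomputable def landauMatrix (v : ι → ℝ) : Matrix ι ι ℝ :=
  (∑ m, v m ^ 2) • (1 : Matrix ι ι ℝ) - vecMulVec v v

lemma landauMatrix_apply (v : ι → ℝ) (k l : ι) :
    landauMatrix v k l = (if k = l then ∑ m, v m ^ 2 else 0) - v k * v l := by
  simp [landauMatrix, one_apply, vecMulVec_apply]

lemma landauMatrix_isSymm (v : ι → ℝ) : (landauMatrix v).IsSymm := by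
  simp [landauMatrix, IsSymm, transpose_sub, transpose_vecMulVec]

lemma dotProduct_landauMatrix_mulVec (x v : ι → ℝ) :
    x ⬝ᵥ landauMatrix v *ᵥ x = (∑ i, v i ^ 2) * (∑ i, x i ^ 2) - (∑ i, x i * v i) ^ 2 := by
  rw [landauMatrix, sub_mulVec, smul_mulVec, one_mulVec, vecMulVec_mulVec, dotProduct_sub,
    dotProduct_smul, op_smul_eq_smul, dotProduct_smul, dotProduct_comm v x, smul_eq_mul,
    smul_eq_mul, sq]
  simp only [dotProduct, ← sq]

lemma dotProduct_landauMatrix_mulVec_nonneg (x v : ι → ℝ) : 0 ≤ x ⬝ᵥ landauMatrix v *ᵥ x := by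
  rw [dotProduct_landauMatrix_mulVec, sum_sq_mul_sum_sq_sub_sq]
  positivity

lemma dotProduct_landauMatrix_mulVec_pos {x v : ι → ℝ} (hx : x ≠ 0)
    (hv : v ∉ Submodule.span ℝ {x}) : 0 < x ⬝ᵥ landauMatrix v *ᵥ x := by
  refine (dotProduct_landauMatrix_mulVec_nonneg x v).lt_of_ne fun h =>
    hv (mem_span_singleton_of_forall_mul_eq_mul hx ?_)
  rw [dotProduct_landauMatrix_mulVec, sum_sq_mul_sum_sq_sub_sq, eq_comm, div_eq_zero_iff] at h
  have hcross := h.resolve_right two_ne_zero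
  intro i j
  have hrow := (Finset.sum_eq_zero_iff_of_nonneg fun i _ =>
    Finset.sum_nonneg fun j _ => sq_nonneg (x i * v j - x j * v i)).1 hcross i (Finset.mem_univ i)
  have hij :=
    (Finset.sum_eq_zero_iff_of_nonneg fun j _ => sq_nonneg _).1 hrow j (Finset.mem_univ j)
  exact sub_eq_zero.1 (pow_eq_zero_iff two_ne_zero |>.1 hij)

lemma abs_landauMatrix_apply_le (v : ι → ℝ) (k l : ι) :
    |landauMatrix v k l| ≤ 2 * ∑ m, v m ^ 2 := by
  have hsq : ∀ m, v m ^ 2 ≤ ∑ m, v m ^ 2 := fun m =>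
    Finset.single_le_sum (fun j _ => sq_nonneg (v j)) (Finset.mem_univ m)
  have hprod : |v k * v l| ≤ ∑ m, v m ^ 2 := by
    rw [abs_mul]
    nlinarith [sq_abs (v k), sq_abs (v l), hsq k, hsq l, sq_nonneg (|v k| - |v l|)]
  have hdiag : |if k = l then ∑ m, v m ^ 2 else 0| ≤ ∑ m, v m ^ 2 := by
    split_ifs <;> simp [abs_of_nonneg, Finset.sum_nonneg, sq_nonneg]
  rw [landauMatrix_apply]
  linarith [abs_sub (if k = l then ∑ m, v m ^ 2 else 0) (v k * v l)]

lemma continuous_landauMatrix : Continuous (landauMatrix : (ι → ℝ) → Matrix ι ι ℝ) := by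
  unfold landauMatrix
  fun_prop

variable {γ : ℝ} {ρ : (ι → ℝ) → ℝ}

lemma integrable_rpow_mul_landauMatrix_apply_mul (hmeas : Measurable ρ)
    (hint : Integrable fun v : ι → ℝ => Real.sqrt (∑ m, v m ^ 2) ^ γ * (∑ m, v m ^ 2) * ρ v)
    (k l : ι) :
    Integrable fun v => Real.sqrt (∑ m, v m ^ 2) ^ γ * landauMatrix v k l * ρ v := by
  have hcont := continuous_landauMatrix (ι := ι)
  refine (hint.const_mul 2).mono (by fun_prop : Measurable _).aestronglyMeasurable
    (ae_of_all _ fun v => ?_)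
  have hsum : 0 ≤ ∑ m, v m ^ 2 := by positivity
  simp only [norm_mul, Real.norm_eq_abs, abs_two, abs_of_nonneg hsum]
  calc _ ≤ |Real.sqrt (∑ m, v m ^ 2) ^ γ| * (2 * ∑ m, v m ^ 2) * |ρ v| := by
        gcongr
        exact abs_landauMatrix_apply_le v k l
    _ = _ := by ring

theorem posDef_integral_landauMatrix (hι : 1 < Fintype.card ι) (hmeas : Measurable ρ)
    (hpos : ∀ᵐ v, 0 ≤ ρ v) (hρ : ∫ v, ρ v ≠ 0)
    (hint : Integrable fun v : ι → ℝ => Real.sqrt (∑ m, v m ^ 2) ^ γ * (∑ m, v m ^ 2) * ρ v) :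
    (of fun k l => ∫ v, Real.sqrt (∑ m, v m ^ 2) ^ γ * landauMatrix v k l * ρ v).PosDef := by
  let F : (ι → ℝ) → Matrix ι ι ℝ :=
    fun v => of fun k l => Real.sqrt (∑ m, v m ^ 2) ^ γ * landauMatrix v k l * ρ v
  have hF : ∀ k l, Integrable fun v => F v k l :=
    integrable_rpow_mul_landauMatrix_apply_mul hmeas hint
  have hquad : ∀ x v, x ⬝ᵥ F v *ᵥ x =
      Real.sqrt (∑ m, v m ^ 2) ^ γ * ρ v * (x ⬝ᵥ landauMatrix v *ᵥ x) := fun x v => by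
    have hFv : F v = (Real.sqrt (∑ m, v m ^ 2) ^ γ * ρ v) • landauMatrix v := by
      ext k l
      simp only [F, of_apply, Matrix.smul_apply, smul_eq_mul]
      ring
    rw [hFv, smul_mulVec, dotProduct_smul, smul_eq_mul]
  change (of fun k l => ∫ v, F v k l).PosDef
  refine .of_dotProduct_mulVec_pos ?_ fun x hx => ?_
  · ext k l
    simp [F, (landauMatrix_isSymm _).apply]
  have hnonneg : 0 ≤ᵐ[volume] fun v => x ⬝ᵥ F v *ᵥ x := by
    filter_upwards [hpos] with v hv
    rw [hquad]
    exact mul_nonneg (mul_nonneg (by positivity) hv) (dotProduct_landauMatrix_mulVec_nonneg x v)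
  have hsupp : Function.support ρ \ Submodule.span ℝ {x} ⊆
      Function.support fun v => x ⬝ᵥ F v *ᵥ x := fun v ⟨hvρ, hvx⟩ => by
    have hv0 : v ≠ 0 := fun h => hvx (h ▸ Submodule.zero_mem _)
    rw [Function.mem_support, hquad]
    exact mul_ne_zero (mul_ne_zero (rpow_sqrt_sum_sq_pos hv0 γ).ne' hvρ)
      (dotProduct_landauMatrix_mulVec_pos hx hvx).ne'
  rw [star_trivial, dotProduct_of_integral_mulVec hF,
    integral_pos_iff_support_of_nonneg_ae hnonneg (integrable_dotProduct_mulVec hF x)]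
  calc 0 < volume (Function.support ρ) :=
        pos_iff_ne_zero.2 fun h =>
          hρ (integral_eq_zero_of_ae ((Measure.measure_support_eq_zero_iff _).1 h))
    _ = volume (Function.support ρ \ Submodule.span ℝ {x}) :=
        (measure_sdiff_null (volume_span_singleton_eq_zero hι x)).symm
    _ ≤ _ := measure_mono hsupp

theorem stmt7_general (γ : ℝ) (ρ : (Fin 3 → ℝ) → ℝ)
    (hmeas : Measurable ρ)
    (hpos : ∀ᵐ v ∂(volume : Measure (Fin 3 → ℝ)), 0 ≤ ρ v)
    (hmass : ∫ v : Fin 3 → ℝ, ρ v = 1)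
    (hint : Integrable fun v : Fin 3 → ℝ =>
      Real.sqrt (∑ k, v k ^ 2) ^ γ * (∑ k, v k ^ 2) * ρ v)
    (B : Matrix (Fin 3) (Fin 3) ℝ)
    (hB : ∀ k l, B k l = ∫ v : Fin 3 → ℝ,
      Real.sqrt (∑ m, v m ^ 2) ^ γ * ((if k = l then ∑ m, v m ^ 2 else 0) - v k * v l) * ρ v) :
    B.PosDef := by
  have hB' : B = of fun k l => ∫ v, Real.sqrt (∑ m, v m ^ 2) ^ γ * landauMatrix v k l * ρ v := by
    ext k l
    simp only [hB, of_apply, landauMatrix_apply]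
  rw [hB']
  exact posDef_integral_landauMatrix (by simp) hmeas hpos (by simp [hmass]) hint

/-- Strict positive definiteness of the averaged 3D Landau kernel.
For an a.e. nonnegative measurable probability density `ρ` on `ℝ³` with bounded
support such that `|v|^γ |v|² ρ(v)` is integrable, the matrix
`B = ∫ |v|^γ (|v|² I₃ - v ⊗ v) ρ(v) dv` is symmetric positive definite. -/
theorem stmt7 (γ : ℝ) (ρ : (Fin 3 → ℝ) → ℝ)
    (hmeas : Measurable ρ)
    (hpos : ∀ᵐ v ∂(volume : Measure (Fin 3 → ℝ)), 0 ≤ ρ v)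
    (hmass : ∫ v : Fin 3 → ℝ, ρ v = 1)
    (hbdd : Bornology.IsBounded (Function.support ρ))
    (hint : Integrable fun v : Fin 3 → ℝ =>
      Real.sqrt (∑ k, v k ^ 2) ^ γ * (∑ k, v k ^ 2) * ρ v)
    (B : Matrix (Fin 3) (Fin 3) ℝ)
    (hB : ∀ k l, B k l = ∫ v : Fin 3 → ℝ,
      Real.sqrt (∑ m, v m ^ 2) ^ γ * ((if k = l then ∑ m, v m ^ 2 else 0) - v k * v l) * ρ v) :
    B.PosDef :=
  stmt7_general γ ρ hmeas hpos hmass hint B hB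
end

section
/- Fix d ≥ 1 and an open time interval I ⊆ ℝ. Let f, g : I × ℝ^d → ℝ be C¹, strictly positive, and ℤ^d-periodic in the space variable, and let U, W : I × ℝ^d → ℝ^d be C¹ and ℤ^d-periodic in the space variable. Suppose the continuity equations ∂_t f(t,v) = −∇_v·(U(t,v) f(t,v)) and ∂_t g(t,v) = −∇_v·(W(t,v) g(t,v)) hold pointwise on I × ℝ^d. Then for every t ∈ I, the Kullback–Leibler divergence D(t) := ∫_Q f(t,v) log(f(t,v)/g(t,v)) dv, where Q = [0,1)^d, is differentiable in t with derivative D'(t) = ∫_Q f(t,v) ⟨∇_v log(f(t,v)/g(t,v)), U(t,v) − W(t,v)⟩ dv. -/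
open MeasureTheory

/-- The fundamental domain `Q = [0,1)^d` of the torus `𝕋^d = ℝ^d / ℤ^d`. -/
def unitCube (d : ℕ) : Set (Fin d → ℝ) :=
  Set.univ.pi fun _ => Set.Ico (0 : ℝ) 1

/-!
Differentiating under the integral sign (the integrand is `C¹` in time, uniformly on the compact
cube) gives `D'(t) = ∫_Q (log(f/g) + 1) ∂ₜf - (f/g) ∂ₜg`. Substituting the continuity equations
and integrating by parts on the torus, where the boundary terms of the divergence theorem on
`[0,1]^d` cancel by periodicity, turns this into `∫_Q ∇log(f/g)·U f - ∇(f/g)·W g`, and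
`g ∇(f/g) = f ∇log(f/g)` finishes the computation.
-/

open Set Function

theorem unitCube_subset_Icc (d : ℕ) : unitCube d ⊆ Icc 0 1 :=
  fun _ hx => ⟨fun i => (hx i trivial).1, fun i => (hx i trivial).2.le⟩

theorem measurableSet_unitCube (d : ℕ) : MeasurableSet (unitCube d) :=
  .univ_pi fun _ => measurableSet_Ico

theorem unitCube_ae_eq_Icc (d : ℕ) : unitCube d =ᵐ[volume] Icc (0 : Fin d → ℝ) 1 := by
  rw [volume_pi]
  exact Measure.univ_pi_Ico_ae_eq_Icc

theorem Continuous.integrableOn_unitCube {d : ℕ} {E : Type*} [NormedAddCommGroup E]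
    {F : (Fin d → ℝ) → E} (hF : Continuous F) : IntegrableOn F (unitCube d) :=
  (hF.continuousOn.integrableOn_compact isCompact_Icc).mono_set (unitCube_subset_Icc d)

theorem Fin.insertNth_one_eq_insertNth_zero_add_single {n : ℕ} (i : Fin (n + 1))
    (x : Fin n → ℝ) :
    Fin.insertNth (α := fun _ => ℝ) i 1 x = Fin.insertNth i 0 x + Pi.single i 1 := by
  funext j
  refine Fin.succAboveCases i ?_ (fun l => ?_) j <;> simp

theorem integral_unitCube_divergence_eq_zero {d : ℕ} {E : Type*} [NormedAddCommGroup E]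
    [NormedSpace ℝ E] {G : Fin d → (Fin d → ℝ) → E} (hG : ∀ i, ContDiff ℝ 1 (G i))
    (hG_per : ∀ i, Periodic (G i) (Pi.single i 1)) :
    ∫ v in unitCube d, ∑ i, fderiv ℝ (G i) v (Pi.single i 1) = 0 := by
  cases d with
  | zero => simp
  | succ n =>
    have hdiv : Continuous fun v => ∑ i, fderiv ℝ (G i) v (Pi.single i 1) := by
      have := fun i => (hG i).continuous_fderiv one_ne_zero
      fun_prop
    rw [setIntegral_congr_set (unitCube_ae_eq_Icc _),
      integral_divergence_of_hasFDerivAt_off_countable' 0 1 zero_le_one G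
        (fun i x => fderiv ℝ (G i) x) ∅ countable_empty (fun i => (hG i).continuous.continuousOn)
        (fun x _ i => ((hG i).differentiable one_ne_zero x).hasFDerivAt)
        (hdiv.continuousOn.integrableOn_compact isCompact_Icc)]
    refine Finset.sum_eq_zero fun i _ => ?_
    simp only [Pi.one_apply, Pi.zero_apply, Fin.insertNth_one_eq_insertNth_zero_add_single,
      hG_per i _, sub_self]

theorem integral_unitCube_mul_divergence {d : ℕ} {a : (Fin d → ℝ) → ℝ}
    {b : Fin d → (Fin d → ℝ) → ℝ} (ha : ContDiff ℝ 1 a) (hb : ∀ k, ContDiff ℝ 1 (b k))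
    (ha_per : ∀ k, Periodic a (Pi.single k 1)) (hb_per : ∀ k, Periodic (b k) (Pi.single k 1)) :
    ∫ v in unitCube d, a v * ∑ k, fderiv ℝ (b k) v (Pi.single k 1) =
      -∫ v in unitCube d, ∑ k, fderiv ℝ a v (Pi.single k 1) * b k v := by
  have hda := ha.continuous_fderiv one_ne_zero
  have hdb := fun k => (hb k).continuous_fderiv one_ne_zero
  have ha' := ha.continuous
  have hb' := fun k => (hb k).continuous
  have hprod : ∀ v k, fderiv ℝ (fun w => a w * b k w) v (Pi.single k 1) =
      fderiv ℝ a v (Pi.single k 1) * b k v + a v * fderiv ℝ (b k) v (Pi.single k 1) := by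
    intro v k
    rw [fderiv_fun_mul (ha.differentiable one_ne_zero v) ((hb k).differentiable one_ne_zero v)]
    simp only [add_apply, smul_apply, smul_eq_mul]
    ring
  have hzero := integral_unitCube_divergence_eq_zero (G := fun k w => a w * b k w)
    (fun k => ha.mul (hb k)) (fun k v => by simp only [ha_per k v, hb_per k v])
  simp only [hprod, Finset.sum_add_distrib, ← Finset.mul_sum] at hzero
  rw [integral_add (by fun_prop : Continuous _).integrableOn_unitCube
    (by fun_prop : Continuous _).integrableOn_unitCube] at hzero
  linear_combination hzero

theorem hasDerivAt_setIntegral_of_continuousOn {E G : Type*} [TopologicalSpace E]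
    [MeasurableSpace E] [OpensMeasurableSpace E] [NormedAddCommGroup G] [NormedSpace ℝ G]
    {μ : Measure E} [IsFiniteMeasureOnCompacts μ] {I : Set ℝ} {s K : Set E}
    (hI : IsOpen I) (hK : IsCompact K) (hs : MeasurableSet s) (hsK : s ⊆ K)
    {F F' : ℝ × E → G} (hF : ContinuousOn F (I ×ˢ K)) (hF' : ContinuousOn F' (I ×ˢ K))
    (hderiv : ∀ t ∈ I, ∀ v ∈ s, HasDerivAt (fun τ => F (τ, v)) (F' (t, v)) t)
    {t : ℝ} (ht : t ∈ I) :
    HasDerivAt (fun τ => ∫ v in s, F (τ, v) ∂μ) (∫ v in s, F' (t, v) ∂μ) t := by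
  have slice : ∀ {H : ℝ × E → G}, ContinuousOn H (I ×ˢ K) → ∀ τ ∈ I,
      ContinuousOn (fun v => H (τ, v)) K := fun hH τ hτ =>
    hH.comp (Continuous.prodMk_right τ).continuousOn fun v hv => ⟨hτ, hv⟩
  obtain ⟨ε, hε, hball⟩ : ∃ ε > 0, Metric.closedBall t ε ⊆ I :=
    Metric.nhds_basis_closedBall.mem_iff.1 (hI.mem_nhds ht)
  obtain ⟨C, hC⟩ := ((isCompact_closedBall t ε).prod hK).exists_bound_of_continuousOn
    (hF'.mono (prod_mono hball subset_rfl))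
  have hsfin : μ s ≠ ⊤ := (measure_mono hsK).trans_lt hK.measure_lt_top |>.ne
  refine (hasDerivAt_integral_of_dominated_loc_of_deriv_le (μ := μ.restrict s)
    (F := fun τ v => F (τ, v)) (F' := fun τ v => F' (τ, v)) (bound := fun _ => C)
    (Metric.ball_mem_nhds t hε) ?_ ?_ ?_ ?_ (integrableOn_const hsfin) ?_).2
  · filter_upwards [hI.mem_nhds ht] with τ hτ
    exact (slice hF τ hτ).aestronglyMeasurable_of_subset_isCompact hK hs hsK
  · exact (slice hF t ht).integrableOn_of_subset_isCompact hK hs hsK hsfin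
  · exact (slice hF' t ht).aestronglyMeasurable_of_subset_isCompact hK hs hsK
  · filter_upwards [ae_restrict_mem hs] with v hv τ hτ
    exact hC (τ, v) ⟨Metric.ball_subset_closedBall hτ, hsK hv⟩
  · filter_upwards [ae_restrict_mem hs] with v hv τ hτ
    exact hderiv τ (hball (Metric.ball_subset_closedBall hτ)) v hv

theorem ContDiffOn.contDiff_slice {d : ℕ} {X : Type*} [NormedAddCommGroup X] [NormedSpace ℝ X]
    {I : Set ℝ} {F : ℝ × (Fin d → ℝ) → X}
    (hF : ContDiffOn ℝ 1 F (I ×ˢ univ)) {t : ℝ} (ht : t ∈ I) :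
    ContDiff ℝ 1 (fun w => F (t, w)) :=
  contDiffOn_univ.1 <| hF.comp (contDiff_prodMk_right t).contDiffOn fun _ _ => ⟨ht, trivial⟩

theorem ContDiffOn.hasDerivAt_slice_fst {E X : Type*} [NormedAddCommGroup E] [NormedSpace ℝ E]
    [NormedAddCommGroup X] [NormedSpace ℝ X] {I : Set ℝ} {F : ℝ × E → X} (hI : IsOpen I)
    (hF : ContDiffOn ℝ 1 F (I ×ˢ univ)) {t : ℝ} (ht : t ∈ I) (v : E) :
    HasDerivAt (fun τ => F (τ, v)) (fderiv ℝ F (t, v) (1, 0)) t := by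
  have hFt : HasFDerivAt F (fderiv ℝ F (t, v)) (t, v) :=
    ((hF.contDiffAt ((hI.prod isOpen_univ).mem_nhds ⟨ht, trivial⟩)).differentiableAt
      one_ne_zero).hasFDerivAt
  exact hFt.comp_hasDerivAt t ((hasDerivAt_id t).prodMk (hasDerivAt_const t v))

theorem HasDerivAt.mul_log_div {a b : ℝ → ℝ} {a' b' t : ℝ} (ha : HasDerivAt a a' t)
    (hb : HasDerivAt b b' t) (ha_pos : 0 < a t) (hb_pos : 0 < b t) :
    HasDerivAt (fun τ => a τ * Real.log (a τ / b τ))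
      ((Real.log (a t / b t) + 1) * a' - a t / b t * b') t := by
  have hlog := (ha.fun_div hb hb_pos.ne').log (div_pos ha_pos hb_pos).ne'
  refine (ha.fun_mul hlog).congr_deriv ?_
  field_simp
  ring

theorem Function.Periodic.of_intCast_translate {d : ℕ} {X : Type*} {F : (Fin d → ℝ) → X}
    (h : ∀ v (m : Fin d → ℤ), F (v + fun i => (m i : ℝ)) = F v) (k : Fin d) :
    Periodic F (Pi.single k 1) := fun v => by
  convert h v (Pi.single k 1) using 3
  ext j
  rcases eq_or_ne j k with rfl | hjk <;> simp [*]

theorem integral_unitCube_transport_mul_log_div {d : ℕ} {f g : (Fin d → ℝ) → ℝ}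
    {U W : (Fin d → ℝ) → Fin d → ℝ} (hf : ContDiff ℝ 1 f) (hg : ContDiff ℝ 1 g)
    (hU : ContDiff ℝ 1 U) (hW : ContDiff ℝ 1 W) (hf_pos : ∀ v, 0 < f v) (hg_pos : ∀ v, 0 < g v)
    (hf_per : ∀ k, Periodic f (Pi.single k 1)) (hg_per : ∀ k, Periodic g (Pi.single k 1))
    (hU_per : ∀ k, Periodic U (Pi.single k 1)) (hW_per : ∀ k, Periodic W (Pi.single k 1)) :
    ∫ v in unitCube d, ((Real.log (f v / g v) + 1) *
        -∑ k, fderiv ℝ (fun w => U w k * f w) v (Pi.single k 1) -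
      f v / g v * -∑ k, fderiv ℝ (fun w => W w k * g w) v (Pi.single k 1)) =
    ∫ v in unitCube d, f v *
      ∑ k, fderiv ℝ (fun w => Real.log (f w / g w)) v (Pi.single k 1) * (U v k - W v k) := by
  set q := fun w => f w / g w
  set L := fun w => Real.log (q w)
  have hq : ContDiff ℝ 1 q := hf.div hg fun v => (hg_pos v).ne'
  have hL : ContDiff ℝ 1 L := hq.log fun v => (div_pos (hf_pos v) (hg_pos v)).ne'
  have hUk := fun k => contDiff_pi.1 hU k
  have hWk := fun k => contDiff_pi.1 hW k
  have hUf : ∀ k, ContDiff ℝ 1 fun w => U w k * f w := fun k => (hUk k).mul hf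
  have hWg : ∀ k, ContDiff ℝ 1 fun w => W w k * g w := fun k => (hWk k).mul hg
  have hq_per : ∀ k, Periodic q (Pi.single k 1) := fun k v => by
    simp only [q, hf_per k v, hg_per k v]
  have ibp_U := integral_unitCube_mul_divergence (hL.add (contDiff_const (c := (1 : ℝ)))) hUf
    (fun k v => by simp only [L, hq_per k v]) (fun k v => by simp only [hU_per k v, hf_per k v])
  have ibp_W := integral_unitCube_mul_divergence hq hWg hq_per
    (fun k v => by simp only [hW_per k v, hg_per k v])
  have hlog_deriv : ∀ v k, fderiv ℝ q v (Pi.single k 1) * g v =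
      f v * fderiv ℝ L v (Pi.single k 1) := by
    intro v k
    rw [fderiv.log (hq.differentiable one_ne_zero v) (div_pos (hf_pos v) (hg_pos v)).ne']
    simp only [q, smul_apply, smul_eq_mul]
    field_simp [(hf_pos v).ne', (hg_pos v).ne']
  simp only [fderiv_add_const] at ibp_U
  calc _ = ∫ v in unitCube d, (q v * ∑ k, fderiv ℝ (fun w => W w k * g w) v (Pi.single k 1) -
        (L v + 1) * ∑ k, fderiv ℝ (fun w => U w k * f w) v (Pi.single k 1)) :=
        integral_congr_ae (.of_forall fun v => by simp only [q, L]; ring)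
    _ = ∫ v in unitCube d, (∑ k, fderiv ℝ L v (Pi.single k 1) * (U v k * f v) -
        ∑ k, fderiv ℝ q v (Pi.single k 1) * (W v k * g v)) := by
      rw [integral_sub, ibp_U, ibp_W, integral_sub]
      · ring
      all_goals
        refine Continuous.integrableOn_unitCube ?_
        have := hf.continuous; have := hg.continuous; have := hU.continuous
        have := hW.continuous; have := hq.continuous; have := hL.continuous
        have := hq.continuous_fderiv one_ne_zero; have := hL.continuous_fderiv one_ne_zero
        have := fun k => (hUf k).continuous_fderiv one_ne_zero
        have := fun k => (hWg k).continuous_fderiv one_ne_zero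
        fun_prop
    _ = _ := integral_congr_ae (.of_forall fun v => by
      simp only [Finset.mul_sum, ← Finset.sum_sub_distrib]
      refine Finset.sum_congr rfl fun k _ => ?_
      linear_combination -W v k * hlog_deriv v k)

theorem stmt8_general (d : ℕ)
    (I : Set ℝ) (hI_open : IsOpen I)
    (f g : ℝ × (Fin d → ℝ) → ℝ)
    (U W : ℝ × (Fin d → ℝ) → Fin d → ℝ)
    (hf : ContDiffOn ℝ 1 f (I ×ˢ Set.univ)) (hg : ContDiffOn ℝ 1 g (I ×ˢ Set.univ))
    (hU : ContDiffOn ℝ 1 U (I ×ˢ Set.univ)) (hW : ContDiffOn ℝ 1 W (I ×ˢ Set.univ))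
    (hf_pos : ∀ p, 0 < f p) (hg_pos : ∀ p, 0 < g p)
    (hf_per : ∀ (t : ℝ) (v : Fin d → ℝ) (m : Fin d → ℤ),
      f (t, v + fun i => (m i : ℝ)) = f (t, v))
    (hg_per : ∀ (t : ℝ) (v : Fin d → ℝ) (m : Fin d → ℤ),
      g (t, v + fun i => (m i : ℝ)) = g (t, v))
    (hU_per : ∀ (t : ℝ) (v : Fin d → ℝ) (m : Fin d → ℤ),
      U (t, v + fun i => (m i : ℝ)) = U (t, v))
    (hW_per : ∀ (t : ℝ) (v : Fin d → ℝ) (m : Fin d → ℤ),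
      W (t, v + fun i => (m i : ℝ)) = W (t, v))
    (hf_pde : ∀ t ∈ I, ∀ v : Fin d → ℝ,
      fderiv ℝ f (t, v) ((1 : ℝ), (0 : Fin d → ℝ)) =
        -∑ k : Fin d, fderiv ℝ (fun w => U (t, w) k * f (t, w)) v (Pi.single k 1))
    (hg_pde : ∀ t ∈ I, ∀ v : Fin d → ℝ,
      fderiv ℝ g (t, v) ((1 : ℝ), (0 : Fin d → ℝ)) =
        -∑ k : Fin d, fderiv ℝ (fun w => W (t, w) k * g (t, w)) v (Pi.single k 1)) :
    ∀ t ∈ I,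
      HasDerivAt (fun τ => ∫ v in unitCube d, f (τ, v) * Real.log (f (τ, v) / g (τ, v)))
        (∫ v in unitCube d, f (t, v) *
          ∑ k : Fin d, fderiv ℝ (fun w => Real.log (f (t, w) / g (t, w))) v (Pi.single k 1)
            * (U (t, v) k - W (t, v) k)) t := by
  intro t ht
  have hIQ : I ×ˢ Icc (0 : Fin d → ℝ) 1 ⊆ I ×ˢ univ := prod_mono subset_rfl (subset_univ _)
  have hdt : ∀ {h : ℝ × (Fin d → ℝ) → ℝ}, ContDiffOn ℝ 1 h (I ×ˢ univ) →
      ContinuousOn (fun p => fderiv ℝ h p (1, 0)) (I ×ˢ univ) := fun hh =>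
    (hh.continuousOn_fderiv_of_isOpen (hI_open.prod isOpen_univ) le_rfl).clm_apply
      continuousOn_const
  have hlog := (hf.continuousOn.div hg.continuousOn fun p _ => (hg_pos p).ne').log
    fun p _ => (div_pos (hf_pos p) (hg_pos p)).ne'
  have hD := hasDerivAt_setIntegral_of_continuousOn (μ := volume) hI_open isCompact_Icc
    (measurableSet_unitCube d) (unitCube_subset_Icc d)
    (F' := fun p => (Real.log (f p / g p) + 1) * fderiv ℝ f p (1, 0) -
      f p / g p * fderiv ℝ g p (1, 0))
    ((hf.continuousOn.mul hlog).mono hIQ)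
    ((((hlog.add continuousOn_const).mul (hdt hf)).sub
      ((hf.continuousOn.div hg.continuousOn fun p _ => (hg_pos p).ne').mul (hdt hg))).mono hIQ)
    (fun τ hτ v _ => (hf.hasDerivAt_slice_fst hI_open hτ v).mul_log_div
      (hg.hasDerivAt_slice_fst hI_open hτ v) (hf_pos _) (hg_pos _)) ht
  have hrate := integral_unitCube_transport_mul_log_div (hf.contDiff_slice ht)
    (hg.contDiff_slice ht) (hU.contDiff_slice ht) (hW.contDiff_slice ht)
    (fun _ => hf_pos _) (fun _ => hg_pos _)
    (Periodic.of_intCast_translate (hf_per t)) (Periodic.of_intCast_translate (hg_per t))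
    (Periodic.of_intCast_translate (hU_per t)) (Periodic.of_intCast_translate (hW_per t))
  simp only [← hf_pde t ht, ← hg_pde t ht] at hrate
  exact hrate ▸ hD

/-- Time evolution of the Kullback–Leibler divergence of two
positive `ℤ^d`-periodic `C¹` densities `f, g` solving the continuity equations
`∂ₜ f = -∇·(U f)` and `∂ₜ g = -∇·(W g)` on an open time interval `I`:
`D(t) = ∫_Q f log(f/g)` is differentiable with
`D'(t) = ∫_Q f ⟨∇ log(f/g), U - W⟩`. -/
theorem stmt8 (d : ℕ) (hd : 1 ≤ d)
    (I : Set ℝ) (hI_open : IsOpen I) (hI_conv : Convex ℝ I)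
    (f g : ℝ × (Fin d → ℝ) → ℝ)
    (U W : ℝ × (Fin d → ℝ) → Fin d → ℝ)
    (hf : ContDiffOn ℝ 1 f (I ×ˢ Set.univ)) (hg : ContDiffOn ℝ 1 g (I ×ˢ Set.univ))
    (hU : ContDiffOn ℝ 1 U (I ×ˢ Set.univ)) (hW : ContDiffOn ℝ 1 W (I ×ˢ Set.univ))
    (hf_pos : ∀ p, 0 < f p) (hg_pos : ∀ p, 0 < g p)
    (hf_per : ∀ (t : ℝ) (v : Fin d → ℝ) (m : Fin d → ℤ),
      f (t, v + fun i => (m i : ℝ)) = f (t, v))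
    (hg_per : ∀ (t : ℝ) (v : Fin d → ℝ) (m : Fin d → ℤ),
      g (t, v + fun i => (m i : ℝ)) = g (t, v))
    (hU_per : ∀ (t : ℝ) (v : Fin d → ℝ) (m : Fin d → ℤ),
      U (t, v + fun i => (m i : ℝ)) = U (t, v))
    (hW_per : ∀ (t : ℝ) (v : Fin d → ℝ) (m : Fin d → ℤ),
      W (t, v + fun i => (m i : ℝ)) = W (t, v))
    (hf_pde : ∀ t ∈ I, ∀ v : Fin d → ℝ,
      fderiv ℝ f (t, v) ((1 : ℝ), (0 : Fin d → ℝ)) =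
        -∑ k : Fin d, fderiv ℝ (fun w => U (t, w) k * f (t, w)) v (Pi.single k 1))
    (hg_pde : ∀ t ∈ I, ∀ v : Fin d → ℝ,
      fderiv ℝ g (t, v) ((1 : ℝ), (0 : Fin d → ℝ)) =
        -∑ k : Fin d, fderiv ℝ (fun w => W (t, w) k * g (t, w)) v (Pi.single k 1)) :
    ∀ t ∈ I,
      HasDerivAt (fun τ => ∫ v in unitCube d, f (τ, v) * Real.log (f (τ, v) / g (τ, v)))
        (∫ v in unitCube d, f (t, v) *
          ∑ k : Fin d, fderiv ℝ (fun w => Real.log (f (t, w) / g (t, w))) v (Pi.single k 1)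
            * (U (t, v) k - W (t, v) k)) t :=
  stmt8_general d I hI_open f g U W hf hg hU hW hf_pos hg_pos hf_per hg_per hU_per hW_per hf_pde
    hg_pde
end

section
/- Let d ≥ 2, γ ∈ ℝ, C_γ > 0, and define the Landau kernel A(z) := C_γ |z|^γ (|z|² I_d − z ⊗ z) for z ∈ ℝ^d, z ≠ 0. Let s : ℝ^d → ℝ^d be differentiable, and fix u, w ∈ ℝ^d with w ≠ u. Then the divergence at w of the vector field w' ↦ A(w' − u)(s(w') − s(u)) equals ∑_{i,j=1}^d A_{ij}(w − u) ∂s_j/∂w_i (w) − C_γ (d − 1) |w − u|^γ ⟨w − u, s(w) − s(u)⟩. -/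
/-!
Write `A(z) = C |z|^(γ+2) Π(z)` with `Π(z) = I - z zᵀ / |z|²`. The product rule gives
`div (A b) = A : ∇b + (div A) · b`, where `(div A)_j = ∑ᵢ ∂ᵢ A_ij`. For a matrix field
`φ(|z|²) Π(z)` the derivative of the radial factor is parallel to `z`, hence killed by `Π`
(`zᵀ Π(z) = 0`), so `div A = φ div Π`; a direct computation gives `div Π(z) = -(d - 1) z / |z|²`,
and `C |z|^(γ+2) / |z|² = C |z|^γ`.
-/

open Finset Filter Topology Matrix

theorem fderiv_apply_single {ι : Type*} [DecidableEq ι] (z : ι → ℝ) (k i : ι) :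
    fderiv ℝ (fun x : ι → ℝ => x k) z (Pi.single i 1) = if k = i then 1 else 0 := by
  simp [(hasFDerivAt_apply k z).fderiv, Pi.single_apply]

section

variable {ι : Type*} [Fintype ι]

def sqNorm (z : ι → ℝ) : ℝ := ∑ k, z k ^ 2

theorem sqNorm_pos {z : ι → ℝ} (hz : z ≠ 0) : 0 < sqNorm z := by
  obtain ⟨k, hk⟩ := Function.ne_iff.mp hz
  exact sum_pos' (fun i _ => sq_nonneg (z i)) ⟨k, mem_univ k, pow_two_pos_of_ne_zero hk⟩

theorem hasFDerivAt_sqNorm (z : ι → ℝ) :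
    HasFDerivAt sqNorm
      (∑ k, (2 * z k) • ContinuousLinearMap.proj (R := ℝ) (φ := fun _ : ι => ℝ) k) z := by
  refine HasFDerivAt.fun_sum fun k _ => ?_
  simpa using (hasFDerivAt_apply (𝕜 := ℝ) k z).pow 2

theorem differentiable_sqNorm : Differentiable ℝ (sqNorm : (ι → ℝ) → ℝ) :=
  fun z => (hasFDerivAt_sqNorm z).differentiableAt

theorem sqrt_sqNorm_rpow_add_two {z : ι → ℝ} (hz : z ≠ 0) (γ : ℝ) :
    √(sqNorm z) ^ (γ + 2) = √(sqNorm z) ^ γ * sqNorm z := by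
  have hQ := sqNorm_pos hz
  simpa [Real.sq_sqrt hQ.le] using Real.rpow_add_natCast (Real.sqrt_pos.2 hQ).ne' γ 2

variable [DecidableEq ι]

theorem fderiv_sqNorm_single (z : ι → ℝ) (i : ι) :
    fderiv ℝ sqNorm z (Pi.single i 1) = 2 * z i := by
  simp [(hasFDerivAt_sqNorm z).fderiv, Pi.single_apply]

theorem fderiv_comp_sqNorm_single {f : ℝ → ℝ} {z : ι → ℝ} (hf : DifferentiableAt ℝ f (sqNorm z))
    (i : ι) :
    fderiv ℝ (fun x => f (sqNorm x)) z (Pi.single i 1) = 2 * deriv f (sqNorm z) * z i := by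
  rw [fderiv_fun_comp z hf (hasFDerivAt_sqNorm z).differentiableAt]
  simp only [ContinuousLinearMap.comp_apply, fderiv_sqNorm_single, fderiv_eq_smul_deriv,
    smul_eq_mul]
  ring

noncomputable def divergence (F : (ι → ℝ) → ι → ℝ) (w : ι → ℝ) : ℝ :=
  ∑ i, fderiv ℝ (fun x => F x i) w (Pi.single i 1)

theorem Filter.EventuallyEq.divergence_eq {F G : (ι → ℝ) → ι → ℝ} {w : ι → ℝ} (h : F =ᶠ[𝓝 w] G) :
    divergence F w = divergence G w := by
  refine sum_congr rfl fun i _ => ?_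
  have hi : (fun x => F x i) =ᶠ[𝓝 w] fun x => G x i := h.mono fun x hx => congrFun hx i
  rw [hi.fderiv_eq]

noncomputable def matrixDivergence (M : (ι → ℝ) → Matrix ι ι ℝ) (w : ι → ℝ) : ι → ℝ :=
  fun j => ∑ i, fderiv ℝ (fun x => M x i j) w (Pi.single i 1)

theorem divergence_mulVec {M : (ι → ℝ) → Matrix ι ι ℝ} {b : (ι → ℝ) → ι → ℝ} {w : ι → ℝ}
    (hM : ∀ i j, DifferentiableAt ℝ (fun x => M x i j) w)
    (hb : ∀ j, DifferentiableAt ℝ (fun x => b x j) w) :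
    divergence (fun x => M x *ᵥ b x) w
      = ∑ i, ∑ j, M w i j * fderiv ℝ (fun x => b x j) w (Pi.single i 1)
        + matrixDivergence M w ⬝ᵥ b w := by
  have hrow : ∀ i, fderiv ℝ (fun x => (M x *ᵥ b x) i) w (Pi.single i 1)
      = ∑ j, (M w i j * fderiv ℝ (fun x => b x j) w (Pi.single i 1)
        + fderiv ℝ (fun x => M x i j) w (Pi.single i 1) * b w j) := by
    intro i
    simp only [mulVec, dotProduct]
    rw [fderiv_fun_sum (u := univ) (A := fun j x => M x i j * b x j)
      fun j _ => (hM i j).mul (hb j), _root_.sum_apply]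
    refine sum_congr rfl fun j _ => ?_
    rw [fderiv_fun_mul (hM i j) (hb j)]
    simp only [_root_.add_apply, _root_.smul_apply, smul_eq_mul]
    ring
  simp only [divergence, matrixDivergence, dotProduct, hrow, sum_add_distrib, sum_mul]
  rw [sum_comm (f := fun i j => fderiv ℝ (fun x => M x i j) w (Pi.single i 1) * b w j)]

theorem matrixDivergence_comp_sub (M : (ι → ℝ) → Matrix ι ι ℝ) (u w : ι → ℝ) :
    matrixDivergence (fun x => M (x - u)) w = matrixDivergence M (w - u) := by
  ext j
  refine sum_congr rfl fun i _ => ?_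
  rw [fderiv_comp_sub (f := fun x => M x i j)]

noncomputable def orthProj (z : ι → ℝ) : Matrix ι ι ℝ := 1 - (sqNorm z)⁻¹ • vecMulVec z z

theorem orthProj_apply (z : ι → ℝ) (i j : ι) :
    orthProj z i j = (if i = j then 1 else 0) - z i * z j * (sqNorm z)⁻¹ := by
  simp only [orthProj, Matrix.sub_apply, one_apply, Matrix.smul_apply, vecMulVec_apply,
    smul_eq_mul, sub_right_inj]
  ring

theorem differentiableAt_orthProj_apply {z : ι → ℝ} (hz : z ≠ 0) (i j : ι) :
    DifferentiableAt ℝ (fun x => orthProj x i j) z := by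
  simp only [orthProj_apply]
  have hinv := (differentiableAt_inv (sqNorm_pos hz).ne').comp z (differentiable_sqNorm z)
  fun_prop

theorem vecMul_orthProj_self {z : ι → ℝ} (hz : z ≠ 0) : z ᵥ* orthProj z = 0 := by
  ext j
  have hQ := (sqNorm_pos hz).ne'
  simp only [vecMul, dotProduct, orthProj_apply, mul_sub, mul_ite, mul_one, mul_zero,
    sum_sub_distrib, sum_ite_eq', mem_univ, if_true, Pi.zero_apply]
  have hsq : ∑ i, z i * (z i * z j * (sqNorm z)⁻¹) = sqNorm z * z j * (sqNorm z)⁻¹ := by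
    simp only [sqNorm, sum_mul]
    exact sum_congr rfl fun i _ => by ring
  rw [hsq, mul_right_comm, mul_inv_cancel₀ hQ, one_mul, sub_self]

theorem matrixDivergence_orthProj {z : ι → ℝ} (hz : z ≠ 0) :
    matrixDivergence orthProj z = -(((Fintype.card ι : ℝ) - 1) / sqNorm z) • z := by
  ext j
  have hQ := (sqNorm_pos hz).ne'
  have hcoord : ∀ k, DifferentiableAt ℝ (fun x : ι → ℝ => x k) z := fun k =>
    differentiableAt_apply k z
  have hpartial : ∀ i, fderiv ℝ (fun x => orthProj x i j) z (Pi.single i 1)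
      = 2 * (z i ^ 2 * z j) * (sqNorm z ^ 2)⁻¹
        - (z j + if i = j then z j else 0) * (sqNorm z)⁻¹ := by
    intro i
    have hprod : DifferentiableAt ℝ (fun x : ι → ℝ => x i * x j) z := by fun_prop
    simp only [orthProj_apply]
    rw [fderiv_const_sub, fderiv_fun_mul (c := fun x => x i * x j) (d := fun x => (sqNorm x)⁻¹)
      hprod ((differentiableAt_inv hQ).comp z (hasFDerivAt_sqNorm z).differentiableAt),
      fderiv_fun_mul (hcoord i) (hcoord j)]
    simp only [_root_.neg_apply, _root_.add_apply, _root_.smul_apply, smul_eq_mul,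
      fderiv_apply_single, fderiv_comp_sqNorm_single (differentiableAt_inv hQ), deriv_inv]
    rcases eq_or_ne i j with rfl | h
    · simp only [↓reduceIte]; ring
    · simp only [if_neg h, if_neg h.symm, ↓reduceIte]; ring
  have hsq : ∑ i, z i ^ 2 * z j = sqNorm z * z j := by rw [sqNorm, sum_mul]
  simp only [matrixDivergence, hpartial, sum_sub_distrib, ← mul_sum, ← sum_mul, hsq,
    sum_add_distrib, sum_ite_eq', mem_univ, if_true, sum_const, card_univ, nsmul_eq_mul,
    Pi.smul_apply, smul_eq_mul]
  field_simp
  ring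

theorem matrixDivergence_smul_orthProj {f : ℝ → ℝ} {z : ι → ℝ} (hz : z ≠ 0)
    (hf : DifferentiableAt ℝ f (sqNorm z)) :
    matrixDivergence (fun x => f (sqNorm x) • orthProj x) z
      = -(((Fintype.card ι : ℝ) - 1) * f (sqNorm z) / sqNorm z) • z := by
  ext j
  have hfQ : DifferentiableAt ℝ (fun x => f (sqNorm x)) z := hf.comp z (differentiable_sqNorm z)
  have hproduct : ∀ i, fderiv ℝ (fun x => (f (sqNorm x) • orthProj x) i j) z (Pi.single i 1)
      = 2 * deriv f (sqNorm z) * (z i * orthProj z i j)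
        + f (sqNorm z) * fderiv ℝ (fun x => orthProj x i j) z (Pi.single i 1) := by
    intro i
    simp only [Matrix.smul_apply, smul_eq_mul]
    rw [fderiv_fun_mul hfQ (differentiableAt_orthProj_apply hz i j)]
    simp only [_root_.add_apply, _root_.smul_apply, smul_eq_mul, fderiv_comp_sqNorm_single hf]
    ring
  have hvecMul := congrFun (vecMul_orthProj_self hz) j
  have hdiv := congrFun (matrixDivergence_orthProj hz) j
  simp only [vecMul, dotProduct, Pi.zero_apply] at hvecMul
  simp only [matrixDivergence, Pi.smul_apply, smul_eq_mul] at hdiv ⊢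
  rw [sum_congr rfl fun i _ => hproduct i, sum_add_distrib, ← mul_sum, ← mul_sum, hvecMul, hdiv]
  ring

noncomputable def landauKernel (C γ : ℝ) (z : ι → ℝ) : Matrix ι ι ℝ :=
  (C * √(sqNorm z) ^ (γ + 2)) • orthProj z

theorem landauKernel_apply (C γ : ℝ) {z : ι → ℝ} (hz : z ≠ 0) (i j : ι) :
    landauKernel C γ z i j
      = C * √(sqNorm z) ^ γ * ((if i = j then sqNorm z else 0) - z i * z j) := by
  have hQ := (sqNorm_pos hz).ne'
  rw [landauKernel, Matrix.smul_apply, orthProj_apply, sqrt_sqNorm_rpow_add_two hz, smul_eq_mul]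
  split_ifs
  · field_simp
  · field_simp
    ring

theorem differentiableAt_landauKernel_apply (C γ : ℝ) {z : ι → ℝ} (hz : z ≠ 0) (i j : ι) :
    DifferentiableAt ℝ (fun x => landauKernel C γ x i j) z := by
  have hQ := sqNorm_pos hz
  have hsqrt : DifferentiableAt ℝ (fun x => √(sqNorm x)) z :=
    (differentiable_sqNorm z).sqrt hQ.ne'
  have hpow : DifferentiableAt ℝ (fun x => √(sqNorm x) ^ (γ + 2)) z :=
    hsqrt.rpow_const (Or.inl (Real.sqrt_pos.2 hQ).ne')
  simp only [landauKernel, Matrix.smul_apply, smul_eq_mul]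
  exact (hpow.const_mul C).mul (differentiableAt_orthProj_apply hz i j)

theorem matrixDivergence_landauKernel (C γ : ℝ) {z : ι → ℝ} (hz : z ≠ 0) :
    matrixDivergence (landauKernel C γ) z
      = -(C * ((Fintype.card ι : ℝ) - 1) * √(sqNorm z) ^ γ) • z := by
  have hQ := sqNorm_pos hz
  have hf : DifferentiableAt ℝ (fun t => C * √t ^ (γ + 2)) (sqNorm z) :=
    ((differentiableAt_id.sqrt hQ.ne').rpow_const
      (Or.inl (Real.sqrt_pos.2 hQ).ne')).const_mul C
  rw [show landauKernel C γ = fun x => (fun t => C * √t ^ (γ + 2)) (sqNorm x) • orthProj x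
      from rfl, matrixDivergence_smul_orthProj hz hf, sqrt_sqNorm_rpow_add_two hz]
  field_simp

end

theorem stmt11_general (d : ℕ) (γ Cγ : ℝ)
    (A : (Fin d → ℝ) → Matrix (Fin d) (Fin d) ℝ)
    (hA : ∀ z : Fin d → ℝ, z ≠ 0 → ∀ i j, A z i j
      = Cγ * Real.sqrt (∑ k, z k ^ 2) ^ γ *
        ((if i = j then ∑ k, z k ^ 2 else 0) - z i * z j))
    (s : (Fin d → ℝ) → Fin d → ℝ) (hs : Differentiable ℝ s)
    (u w : Fin d → ℝ) (hwu : w ≠ u) :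
    ∑ i : Fin d, fderiv ℝ (fun w' => (A (w' - u)).mulVec (s w' - s u) i) w (Pi.single i 1)
      = (∑ i : Fin d, ∑ j : Fin d,
          A (w - u) i j * fderiv ℝ (fun x => s x j) w (Pi.single i 1))
        - Cγ * ((d : ℝ) - 1) * Real.sqrt (∑ k, (w - u) k ^ 2) ^ γ *
            ∑ k, (w - u) k * (s w k - s u k) := by
  have hz : w - u ≠ 0 := sub_ne_zero.mpr hwu
  have hA_eq : ∀ {x}, x - u ≠ 0 → A (x - u) = landauKernel Cγ γ (x - u) := fun hx =>
    Matrix.ext fun i j => (hA _ hx i j).trans (landauKernel_apply Cγ γ hx i j).symm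
  have hA_near : (fun x => A (x - u) *ᵥ (s x - s u)) =ᶠ[𝓝 w]
      fun x => landauKernel Cγ γ (x - u) *ᵥ (s x - s u) :=
    ((continuous_sub_right u).continuousAt.eventually_ne hz).mono fun x hx =>
      congrArg (· *ᵥ (s x - s u)) (hA_eq hx)
  have hK : ∀ i j, DifferentiableAt ℝ (fun x => landauKernel Cγ γ (x - u) i j) w := fun i j =>
    (differentiableAt_comp_sub u).2 (differentiableAt_landauKernel_apply Cγ γ hz i j)
  have hb : ∀ j, DifferentiableAt ℝ (fun x => (s x - s u) j) w := fun j => by fun_prop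
  change divergence (fun x => A (x - u) *ᵥ (s x - s u)) w = _
  rw [hA_near.divergence_eq, divergence_mulVec hK hb, matrixDivergence_comp_sub,
    matrixDivergence_landauKernel Cγ γ hz, ← hA_eq hz, smul_dotProduct]
  simp only [Pi.sub_apply, fderiv_sub_const, dotProduct, Fintype.card_fin, sqNorm, smul_eq_mul]
  ring

/-- Pointwise divergence identity for the Landau kernel
`A(z) = C_γ |z|^γ (|z|² I_d - z ⊗ z)`: for a differentiable score `s` and
`w ≠ u`, the divergence at `w` of `w' ↦ A(w' - u)(s(w') - s(u))` equals
`∑ᵢⱼ Aᵢⱼ(w-u) ∂sⱼ/∂wᵢ(w) - C_γ (d-1) |w-u|^γ ⟨w-u, s(w) - s(u)⟩`. -/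
theorem stmt11 (d : ℕ) (hd : 2 ≤ d) (γ Cγ : ℝ) (hCγ : 0 < Cγ)
    (A : (Fin d → ℝ) → Matrix (Fin d) (Fin d) ℝ)
    (hA : ∀ z : Fin d → ℝ, z ≠ 0 → ∀ i j, A z i j
      = Cγ * Real.sqrt (∑ k, z k ^ 2) ^ γ *
        ((if i = j then ∑ k, z k ^ 2 else 0) - z i * z j))
    (s : (Fin d → ℝ) → Fin d → ℝ) (hs : Differentiable ℝ s)
    (u w : Fin d → ℝ) (hwu : w ≠ u) :
    ∑ i : Fin d, fderiv ℝ (fun w' => (A (w' - u)).mulVec (s w' - s u) i) w (Pi.single i 1)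
      = (∑ i : Fin d, ∑ j : Fin d,
          A (w - u) i j * fderiv ℝ (fun x => s x j) w (Pi.single i 1))
        - Cγ * ((d : ℝ) - 1) * Real.sqrt (∑ k, (w - u) k ^ 2) ^ γ *
            ∑ k, (w - u) k * (s w k - s u k) :=
  stmt11_general d γ Cγ A hA s hs u w hwu
end
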